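/- Let θ ∈ (0, π) and n ≥ 1 with n·θ < π, write a = cos(θ/2), b = sin(θ/2), and let U(θ) be the 2×2 complex matrix with rows (a, b) and (b, −a). Then there is no complex matrix ρ indexed by (Fin n → Fin 2) × (Fin n → Fin 2) that is positive semidefinite with trace 1 and such that every diagonal entry of ρ · U(θ)^{⊗n} is zero. -/

import Mathlib

open Matrix Real
open scoped ComplexOrder

/-- The `n`-fold Kronecker power of a `d × d` matrix. -/
noncomputable def kronPow {d : ℕ} (V : Matrix (Fin d) (Fin d) ℂ) (n : ℕ) :
    Matrix (Fin n → Fin d) (Fin n → Fin d) ℂ :=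
  fun i j => ∏ k, V (i k) (j k)

lemma kronPow_mul {d n : ℕ} (A B : Matrix (Fin d) (Fin d) ℂ) :
    kronPow (A * B) n = kronPow A n * kronPow B n := by
  ext i j
  simp only [kronPow, Matrix.mul_apply]
  rw [Finset.prod_univ_sum, Fintype.piFinset_univ]
  exact Finset.sum_congr rfl fun x _ => Finset.prod_mul_distrib

lemma kronPow_conjTranspose {d n : ℕ} (A : Matrix (Fin d) (Fin d) ℂ) :
    kronPow Aᴴ n = (kronPow A n)ᴴ := by
  ext i j
  simp [kronPow, Matrix.conjTranspose_apply, star_prod]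

lemma kronPow_diagonal {d n : ℕ} (v : Fin d → ℂ) :
    kronPow (Matrix.diagonal v) n = Matrix.diagonal (fun j : Fin n → Fin d => ∏ k, v (j k)) := by
  ext i j
  by_cases h : i = j
  · subst h; simp [kronPow]
  · obtain ⟨k, hk⟩ := Function.ne_iff.mp h
    rw [Matrix.diagonal_apply_ne _ h]
    exact Finset.prod_eq_zero (Finset.mem_univ k) (Matrix.diagonal_apply_ne _ hk)

lemma kronPow_one {d n : ℕ} : kronPow (1 : Matrix (Fin d) (Fin d) ℂ) n = 1 := by
  rw [← Matrix.diagonal_one, kronPow_diagonal]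
  simp [Matrix.diagonal_one]

lemma psd_trace_mul_nonneg {m : Type*} [Fintype m] [DecidableEq m]
    {A B : Matrix m m ℂ} (hA : A.PosSemidef) (hB : B.PosSemidef) :
    0 ≤ (A * B).trace := by
  open scoped MatrixOrder Matrix.Norms.L2Operator in
  obtain ⟨C, hC⟩ := CStarAlgebra.nonneg_iff_eq_star_mul_self.mp hB.nonneg
  rw [hC, Matrix.star_eq_conjTranspose, ← Matrix.mul_assoc, Matrix.trace_mul_cycle]
  have h := hA.mul_mul_conjTranspose_same C
  rw [Matrix.trace]
  apply Finset.sum_nonneg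
  intro i _
  have := h.dotProduct_mulVec_nonneg (Pi.single i 1)
  simpa [Matrix.mulVec_single, dotProduct, Pi.single_apply] using this

/-- **Optimality of the M–M scheme.** If `nθ < π`, no density matrix `ρ` nullifies the
diagonal of `ρ U(θ)^{⊗n}`, so `n` uses cannot identify the two qubit observables. -/
theorem mm_scheme_lower_bound
    (θ : ℝ) (hθ : θ ∈ Set.Ioo 0 Real.pi)
    (n : ℕ) (hn : 1 ≤ n) (hnθ : (n : ℝ) * θ < Real.pi)
    (U : Matrix (Fin 2) (Fin 2) ℂ)
    (hU : U = !![(Real.cos (θ / 2) : ℂ), (Real.sin (θ / 2) : ℂ);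
                 (Real.sin (θ / 2) : ℂ), (-Real.cos (θ / 2) : ℂ)]) :
    ¬ ∃ ρ : Matrix (Fin n → Fin 2) (Fin n → Fin 2) ℂ,
        ρ.PosSemidef ∧ ρ.trace = 1 ∧
        ∀ i : Fin n → Fin 2, (ρ * kronPow U n) i i = 0 := by
  rintro ⟨ρ, hρ, hρtr, hdiag⟩
  obtain ⟨hθ0, hθπ⟩ := hθ
  set φ : ℝ := θ / 2 with hφdef
  have hφ0 : 0 < φ := by positivity
  have hnφ : (n : ℝ) * φ < π / 2 := by rw [hφdef]; linarith
  have hnφ0 : 0 < (n : ℝ) * φ := by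
    have : (1 : ℝ) ≤ n := by exact_mod_cast hn
    nlinarith
  -- the rotation matrix R = U * Z
  set R : Matrix (Fin 2) (Fin 2) ℂ :=
    !![(Real.cos φ : ℂ), -(Real.sin φ : ℂ); (Real.sin φ : ℂ), (Real.cos φ : ℂ)] with hRdef
  have hUZ : U * Matrix.diagonal ![(1 : ℂ), -1] = R := by
    subst hU
    ext i j
    rw [Matrix.mul_diagonal]
    fin_cases i <;> fin_cases j <;> simp [hRdef]
  set M : Matrix (Fin n → Fin 2) (Fin n → Fin 2) ℂ := kronPow R n with hMdef
  -- trace (ρ M) = 0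
  have htrρM : (ρ * M).trace = 0 := by
    have hM : M = kronPow U n *
        Matrix.diagonal (fun j : Fin n → Fin 2 => ∏ k, (![(1 : ℂ), -1]) (j k)) := by
      rw [hMdef, ← hUZ, kronPow_mul, kronPow_diagonal]
    rw [hM, ← Matrix.mul_assoc, Matrix.trace]
    refine Finset.sum_eq_zero fun i _ => ?_
    simp [Matrix.diag, Matrix.mul_diagonal, hdiag i]
  -- eigendecomposition of R
  have hsqrt2 : (Real.sqrt 2 : ℂ) * (Real.sqrt 2 : ℂ) = 2 := by
    norm_cast
    exact Real.mul_self_sqrt (by norm_num)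
  set p : ℂ := (Real.sqrt 2 : ℂ)⁻¹ with hpdef
  set P : Matrix (Fin 2) (Fin 2) ℂ := p • !![1, 1; -Complex.I, Complex.I] with hPdef
  set dv : Fin 2 → ℂ :=
    fun v => Complex.exp (((if v = 0 then φ else -φ) : ℝ) * Complex.I) with hdvdef
  have hd0 : dv 0 = Complex.cos φ + Complex.sin φ * Complex.I := by
    simp [hdvdef, Complex.exp_mul_I]
  have hd1 : dv 1 = Complex.cos φ - Complex.sin φ * Complex.I := by
    have h : ((-φ : ℝ) : ℂ) * Complex.I = (-(φ : ℂ)) * Complex.I := by push_cast; ring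
    simp [hdvdef, h, Complex.exp_mul_I, Complex.cos_neg, Complex.sin_neg]
    ring
  have hPunit : Pᴴ * P = 1 := by
    ext i j
    fin_cases i <;> fin_cases j <;>
      · simp [hPdef, Matrix.mul_apply, Fin.sum_univ_succ, Matrix.conjTranspose_apply,
          Complex.conj_ofReal, hpdef]
        field_simp
        try rw [hsqrt2]
        try norm_num
        try rw [sq, hsqrt2]
  have hRP : R = P * Matrix.diagonal dv * Pᴴ := by
    have hD : Matrix.diagonal dv = !![dv 0, 0; 0, dv 1] := by
      ext i j; fin_cases i <;> fin_cases j <;> simp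
    rw [hD, hd0, hd1]
    ext i j
    fin_cases i <;> fin_cases j <;>
      · simp [hPdef, hRdef, Matrix.mul_apply, Fin.sum_univ_succ, Matrix.conjTranspose_apply,
          Complex.conj_ofReal, hpdef, Complex.ofReal_cos, Complex.ofReal_sin]
        field_simp
        ring_nf
        simp [pow_succ, mul_assoc, hsqrt2, Complex.I_mul_I]
        exact Or.inl (by rw [← hsqrt2]; ring)
  set Q : Matrix (Fin n → Fin 2) (Fin n → Fin 2) ℂ := kronPow P n with hQdef
  have hQ : Qᴴ * Q = 1 := by
    rw [hQdef, ← kronPow_conjTranspose, ← kronPow_mul, hPunit, kronPow_one]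
  have hQ' : Q * Qᴴ = 1 := mul_eq_one_comm.mp hQ
  set g : (Fin n → Fin 2) → ℂ := fun j => ∏ k, dv (j k) with hgdef
  have hMQ : M = Q * Matrix.diagonal g * Qᴴ := by
    rw [hMdef, hRP, kronPow_mul, kronPow_mul, kronPow_diagonal, kronPow_conjTranspose]
  -- the exponents
  set t : (Fin n → Fin 2) → ℝ := fun j => ∑ k, (if j k = 0 then (1 : ℝ) else -1) with htdef
  have hg : ∀ j, g j = Complex.exp ((t j * φ : ℝ) * Complex.I) := by
    intro j
    have h1 : ∀ k, dv (j k) =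
        Complex.exp ((((if j k = 0 then (1 : ℝ) else -1) * φ : ℝ)) * Complex.I) := by
      intro k
      by_cases h : j k = 0 <;> simp [hdvdef, h]
    rw [hgdef]
    simp only []
    rw [Finset.prod_congr rfl fun k _ => h1 k, ← Complex.exp_sum]
    congr 1
    rw [← Finset.sum_mul]
    push_cast [htdef]
    rw [← Finset.sum_mul]
  have ht : ∀ j, |t j| ≤ (n : ℝ) := by
    intro j
    calc |t j| ≤ ∑ k : Fin n, |if j k = 0 then (1 : ℝ) else -1| :=
          Finset.abs_sum_le_sum_abs _ _
      _ ≤ ∑ _k : Fin n, (1 : ℝ) := by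
          refine Finset.sum_le_sum fun k _ => ?_
          by_cases h : j k = 0 <;> simp [h]
      _ = n := by simp
  set cn : ℝ := 2 * Real.cos (n * φ) with hcndef
  have hcn : 0 < cn := by
    have := Real.cos_pos_of_mem_Ioo (show (n : ℝ) * φ ∈ Set.Ioo (-(π/2)) (π/2) from
      ⟨by linarith, hnφ⟩)
    rw [hcndef]; linarith
  set e : (Fin n → Fin 2) → ℂ := fun j => g j + star (g j) - (cn : ℂ) with hedef
  have he : ∀ j, e j = ((2 * Real.cos (t j * φ) - cn : ℝ) : ℂ) := by
    intro j
    have hstar : star (Complex.exp (((t j * φ : ℝ)) * Complex.I)) =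
        Complex.exp ((-((t j * φ : ℝ) : ℂ)) * Complex.I) := by
      rw [Complex.star_def, ← Complex.exp_conj, _root_.map_mul, Complex.conj_ofReal, Complex.conj_I]
      ring_nf
    rw [hedef]
    simp only []
    rw [hg j, hstar, Complex.exp_mul_I, Complex.exp_mul_I]
    simp only [Complex.cos_neg, Complex.sin_neg]
    push_cast [Complex.ofReal_cos]
    ring
  have hepos : ∀ j, 0 ≤ e j := by
    intro j
    rw [he j, Complex.zero_le_real]
    have h1 : Real.cos ((n : ℝ) * φ) ≤ Real.cos (t j * φ) := by
      rw [← Real.cos_abs (t j * φ)]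
      apply Real.cos_le_cos_of_nonneg_of_le_pi (abs_nonneg _)
      · linarith [Real.pi_pos]
      · rw [abs_mul, abs_of_pos hφ0]
        exact mul_le_mul_of_nonneg_right (ht j) hφ0.le
    rw [hcndef]
    linarith
  -- the PSD matrix
  have hS : (Q * Matrix.diagonal e * Qᴴ).PosSemidef :=
    (Matrix.posSemidef_diagonal_iff.mpr hepos).mul_mul_conjTranspose_same Q
  have hMH : Mᴴ = Q * Matrix.diagonal (fun j => star (g j)) * Qᴴ := by
    rw [hMQ]
    simp [Matrix.conjTranspose_mul, Matrix.diagonal_conjTranspose, Matrix.mul_assoc]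
    rfl
  have hdecomp : Q * Matrix.diagonal e * Qᴴ = M + Mᴴ - (cn : ℂ) • 1 := by
    have h1 : Matrix.diagonal e =
        Matrix.diagonal g + Matrix.diagonal (fun j => star (g j)) - (cn : ℂ) • 1 := by
      ext i j
      by_cases h : i = j
      · subst h; simp [hedef, Matrix.one_apply]
      · simp [Matrix.diagonal_apply_ne _ h, Matrix.one_apply_ne h]
    rw [h1, Matrix.mul_sub, Matrix.sub_mul, Matrix.mul_add, Matrix.add_mul, ← hMQ, ← hMH]
    congr 1
    rw [Matrix.mul_smul, Matrix.mul_one, Matrix.smul_mul, hQ']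
  -- conclusion
  have h0 : 0 ≤ (ρ * (M + Mᴴ - (cn : ℂ) • 1)).trace := by
    rw [← hdecomp]; exact psd_trace_mul_nonneg hρ hS
  have htrMH : (ρ * Mᴴ).trace = 0 := by
    have hh : ρ * Mᴴ = (M * ρ)ᴴ := by
      rw [Matrix.conjTranspose_mul, hρ.1]
    rw [hh, Matrix.trace_conjTranspose, Matrix.trace_mul_comm, htrρM, star_zero]
  have hval : (ρ * (M + Mᴴ - (cn : ℂ) • 1)).trace = -(cn : ℂ) := by
    rw [Matrix.mul_sub, Matrix.mul_add, Matrix.trace_sub, Matrix.trace_add, htrρM, htrMH,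
      Matrix.mul_smul, Matrix.mul_one, Matrix.trace_smul, hρtr]
    simp
  rw [hval] at h0
  have : (0 : ℝ) ≤ -cn := by
    rw [show -(cn : ℂ) = ((-cn : ℝ) : ℂ) by push_cast; ring, Complex.zero_le_real] at h0
    exact h0
  linarith
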